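/- Let p be a prime and let N be a primitive positive definite ternary form which is p-hyperbolic with exponent j for some integer j ≥ 1. Let K₁ and K₂ be two distinct subgroups of ℤ³ of index p with norm ideals 𝔫(K₁) = 𝔫(K₂) = pℤ. Then Λ_p(N) = K₁ ∩ K₂, and Λ_p(N) has index p in each of K₁ and K₂; moreover, if j ≥ 2, then 𝔫(Λ_p(N)) = p²ℤ. -/

import Mathlib

/-- A ternary quadratic form `Q(x,y,z) = ax² + by² + cz² + r·yz + s·zx + t·xy`
with integer coefficients. -/
structure TernaryForm where
  a : ℤ
  b : ℤ
  c : ℤ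
  r : ℤ
  s : ℤ
  t : ℤ

/-- Evaluation of a ternary form on `R³` for any commutative ring `R`. -/
def TernaryForm.eval {R : Type*} [CommRing R] (Q : TernaryForm) (v : Fin 3 → R) : R :=
  (Q.a : R) * v 0 ^ 2 + (Q.b : R) * v 1 ^ 2 + (Q.c : R) * v 2 ^ 2 +
    (Q.r : R) * v 1 * v 2 + (Q.s : R) * v 2 * v 0 + (Q.t : R) * v 0 * v 1

/-- A ternary form is positive definite if `Q(v) > 0` for all `v ≠ 0`. -/
def TernaryForm.PosDef (Q : TernaryForm) : Prop :=
  ∀ v : Fin 3 → ℤ, v ≠ 0 → 0 < Q.eval v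

/-- The Gram matrix of a ternary form: the symmetric rational matrix `G`
with `Q(v) = vᵀ G v`. -/
def TernaryForm.gram (Q : TernaryForm) : Matrix (Fin 3) (Fin 3) ℚ :=
  !![(Q.a : ℚ), (Q.t : ℚ) / 2, (Q.s : ℚ) / 2;
     (Q.t : ℚ) / 2, (Q.b : ℚ), (Q.r : ℚ) / 2;
     (Q.s : ℚ) / 2, (Q.r : ℚ) / 2, (Q.c : ℚ)]

/-- The discriminant of a ternary form: the determinant of its Gram matrix. -/
def TernaryForm.disc (Q : TernaryForm) : ℚ := Q.gram.det

/-- `(N, M)` is a representable pair by scaling `n` if `dN = n·dM` and there is a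
`ℤ`-linear map `T : ℤ³ → ℤ³` with `Q_N(T v) = n · Q_M(v)` for all `v`. -/
def RepPair (n : ℕ) (N M : TernaryForm) : Prop :=
  N.disc = (n : ℚ) * M.disc ∧
    ∃ T : (Fin 3 → ℤ) →ₗ[ℤ] (Fin 3 → ℤ), ∀ v, N.eval (T v) = (n : ℤ) * M.eval v

/-- The norm ideal of a subset `K ⊆ ℤ³`: the ideal of `ℤ` generated by `{Q(x) : x ∈ K}`. -/
def TernaryForm.normIdeal (Q : TernaryForm) (K : Set (Fin 3 → ℤ)) : Ideal ℤ :=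
  Ideal.span (Q.eval '' K)

/-- A ternary form is primitive if the norm ideal of `ℤ³` is all of `ℤ`. -/
def TernaryForm.Primitive (Q : TernaryForm) : Prop :=
  Q.normIdeal Set.univ = ⊤

/-- `Λ_p(N) = {x ∈ ℤ³ : Q_N(x + z) ≡ Q_N(z) (mod p) for all z ∈ ℤ³}`. -/
def LambdaSet (p : ℕ) (N : TernaryForm) : Set (Fin 3 → ℤ) :=
  {x | ∀ z : Fin 3 → ℤ, (p : ℤ) ∣ N.eval (x + z) - N.eval z}

/-- `M` is a `Γ_p`-descendant of `N` if there is a subgroup `K ≤ ℤ³` of index `p` with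
norm ideal `pℤ` and a group isomorphism `T : ℤ³ → K` with `Q_N(T v) = p · Q_M(v)`. -/
def GammaDescendant (p : ℕ) (M N : TernaryForm) : Prop :=
  ∃ K : AddSubgroup (Fin 3 → ℤ), K.index = p ∧
    N.normIdeal (K : Set (Fin 3 → ℤ)) = Ideal.span {(p : ℤ)} ∧
    ∃ T : (Fin 3 → ℤ) →+ (Fin 3 → ℤ), Function.Injective T ∧
      Set.range T = (K : Set (Fin 3 → ℤ)) ∧
      ∀ v, N.eval (T v) = (p : ℤ) * M.eval v

/-- `N` is `p`-hyperbolic with exponent `j` if over `ℤ_p` there are a unit `δ` and a basis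
`y₁, y₂, y₃` of `ℤ_p³` with `Q_N(a y₁ + b y₂ + c y₃) = ab + δ p^j c²`. -/
def IsHyperbolic (p : ℕ) [Fact p.Prime] (j : ℕ) (N : TernaryForm) : Prop :=
  ∃ δ : ℤ_[p], IsUnit δ ∧ ∃ B : Module.Basis (Fin 3) ℤ_[p] (Fin 3 → ℤ_[p]),
    ∀ a b c : ℤ_[p],
      N.eval (a • B 0 + b • B 1 + c • B 2) = a * b + δ * (p : ℤ_[p]) ^ j * c ^ 2

/-- Two ternary forms lie in the same genus if they are equivalent over `ℤ_ℓ`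
for every prime `ℓ`. -/
def SameGenus (M M' : TernaryForm) : Prop :=
  ∀ (ℓ : ℕ) [Fact ℓ.Prime], ∃ U : Matrix (Fin 3) (Fin 3) ℤ_[ℓ],
    IsUnit U.det ∧ ∀ v : Fin 3 → ℤ_[ℓ], M'.eval v = M.eval (U.mulVec v)

/-!
Write `u₀, u₁, u₂` for the coordinates of an integer vector `x` in the hyperbolic basis
`y₁, y₂, y₃` of `ℤ_p³`, so that `N(x) = u₀u₁ + δpʲu₂²`. The polar form of `N` pairs `x` with
`y₂` and `y₁` to `u₀` and `u₁`, and since `j ≥ 1` this identifies `Λ_p(N)` with the subgroup where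
`p ∣ u₀` and `p ∣ u₁`. A subgroup of norm `pℤ` is contained in `{p ∣ u₀} ∪ {p ∣ u₁}`, hence in
one of the two, and equals it because its index is prime; so `{K₁, K₂}` is this pair of
subgroups. For `j ≥ 2`, `N` is divisible by `p²` on `Λ_p(N)`, while `pℤ³ ⊆ Λ_p(N)` together with
primitivity puts `p²` into `𝔫(Λ_p(N))`.
-/

namespace AddSubgroup

variable {G : Type*}

theorem eq_of_le_of_index_prime [AddGroup G] {K H : AddSubgroup G} (hle : K ≤ H)
    (hK : K.index.Prime) (hH : H ≠ ⊤) : K = H := by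
  rw [← relIndex_mul_index hle, Nat.prime_mul_iff] at hK
  rcases hK with ⟨-, hHi⟩ | ⟨-, hrel⟩
  · exact absurd (index_eq_one.mp hHi) hH
  · exact le_antisymm hle (relIndex_eq_one.mp hrel)

theorem relIndex_inf_left_of_index_eq_prime [AddCommGroup G] {H K : AddSubgroup G} {p : ℕ}
    (hp : p.Prime) (hH : H.index = p) (hK : K.index = p) (hne : H ≠ K) :
    (H ⊓ K).relIndex H = p := by
  rw [inf_relIndex_left]
  have hdvd : K.relIndex H ∣ p := hK ▸ relIndex_dvd_index_of_normal K H
  refine (hp.eq_one_or_self_of_dvd _ hdvd).resolve_left fun hrel => hne ?_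
  refine eq_of_le_of_index_prime (relIndex_eq_one.mp hrel) (hH ▸ hp) fun htop => hp.one_lt.ne' ?_
  rw [← hK, htop, index_top]

end AddSubgroup

theorem PadicInt.p_dvd_intCast_iff {p : ℕ} [Fact p.Prime] {n : ℤ} :
    (p : ℤ_[p]) ∣ n ↔ (p : ℤ) ∣ n := by
  simpa using PadicInt.pow_p_dvd_int_iff 1 n

namespace TernaryForm

variable {R : Type*} [CommRing R] (Q : TernaryForm)

def polar (x y : Fin 3 → R) : R := Q.eval (x + y) - Q.eval x - Q.eval y

theorem eval_zero : Q.eval (0 : Fin 3 → R) = 0 := by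
  simp [eval]

theorem eval_smul (c : R) (v : Fin 3 → R) : Q.eval (c • v) = c ^ 2 * Q.eval v := by
  simp only [eval, Pi.smul_apply, smul_eq_mul]
  ring

theorem polar_smul_left (c : R) (x y : Fin 3 → R) : Q.polar (c • x) y = c * Q.polar x y := by
  simp only [polar, eval, Pi.add_apply, Pi.smul_apply, smul_eq_mul]
  ring

theorem polar_eq_sum (x z : Fin 3 → R) :
    Q.polar x z = ∑ i, z i * Q.polar x (Pi.single i 1) := by
  simp only [polar, eval, Fin.sum_univ_three, Pi.add_apply, Pi.single_apply, Fin.reduceEq,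
    ↓reduceIte]
  ring

theorem eval_add_sub_eval (x z : Fin 3 → R) :
    Q.eval (x + z) - Q.eval z = Q.eval x + Q.polar x z := by
  rw [polar]
  ring

variable (R) in
def intCastVec : (Fin 3 → ℤ) →+ (Fin 3 → R) :=
  (Int.castAddHom R).compLeft (Fin 3)

@[simp]
theorem intCastVec_apply (x : Fin 3 → ℤ) : intCastVec R x = fun i => (x i : R) :=
  rfl

theorem intCastVec_single (i : Fin 3) : intCastVec R (Pi.single i 1) = Pi.single i 1 := by
  ext j
  simp [Pi.single_apply, apply_ite (Int.cast : ℤ → R)]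

theorem intCast_eval (x : Fin 3 → ℤ) :
    ((Q.eval x : ℤ) : R) = Q.eval (intCastVec R x) := by
  simp [eval]

theorem intCast_polar (x y : Fin 3 → ℤ) :
    ((Q.polar x y : ℤ) : R) = Q.polar (intCastVec R x) (intCastVec R y) := by
  simp only [polar, Int.cast_sub, intCast_eval, map_add]

theorem normIdeal_le_span_singleton_iff {S : Set (Fin 3 → ℤ)} {n : ℤ} :
    Q.normIdeal S ≤ Ideal.span {n} ↔ ∀ x ∈ S, n ∣ Q.eval x := by
  simp only [normIdeal, Ideal.span_le, Set.image_subset_iff]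
  exact forall₂_congr fun x _ => Ideal.mem_span_singleton

theorem Primitive.span_sq_le_normIdeal {Q : TernaryForm} (hQ : Q.Primitive)
    {S : Set (Fin 3 → ℤ)} {n : ℤ} (hS : ∀ w, n • w ∈ S) :
    Ideal.span {n ^ 2} ≤ Q.normIdeal S := by
  rw [← Ideal.mul_top (Ideal.span _), ← hQ, normIdeal, normIdeal, Ideal.span_mul_span']
  refine Ideal.span_mono ?_
  rintro _ ⟨_, rfl, _, ⟨w, -, rfl⟩, rfl⟩
  exact ⟨n • w, hS w, Q.eval_smul _ _⟩

end TernaryForm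

theorem smul_mem_lambdaSet (p : ℕ) (N : TernaryForm) (w : Fin 3 → ℤ) :
    (p : ℤ) • w ∈ LambdaSet p N := fun z =>
  ⟨p * N.eval w + N.polar w z, by
    rw [N.eval_add_sub_eval, N.eval_smul, N.polar_smul_left]
    ring⟩

theorem dvd_polar_of_mem_lambdaSet {p : ℕ} [Fact p.Prime] {N : TernaryForm} {x : Fin 3 → ℤ}
    (hx : x ∈ LambdaSet p N) (w : Fin 3 → ℤ_[p]) :
    (p : ℤ_[p]) ∣ N.polar (TernaryForm.intCastVec ℤ_[p] x) w := by
  have hint : ∀ z, (p : ℤ_[p]) ∣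
      N.polar (TernaryForm.intCastVec ℤ_[p] x) (TernaryForm.intCastVec ℤ_[p] z) := fun z => by
    rw [← N.intCast_polar, PadicInt.p_dvd_intCast_iff]
    have h0 := hx 0
    rw [add_zero, N.eval_zero, sub_zero] at h0
    have hpolar : N.polar x z = (N.eval (x + z) - N.eval z) - N.eval x := by
      rw [TernaryForm.polar]
      ring
    exact hpolar ▸ (hx z).sub h0
  rw [N.polar_eq_sum]
  refine Finset.dvd_sum fun i _ => (Dvd.dvd.mul_left ?_ _)
  simpa only [TernaryForm.intCastVec_single] using hint (Pi.single i 1)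

section Hyperbolic

variable {p : ℕ} [Fact p.Prime] (B : Module.Basis (Fin 3) ℤ_[p] (Fin 3 → ℤ_[p]))

def IsHyperbolicBasis (N : TernaryForm) (δ : ℤ_[p]) (j : ℕ) : Prop :=
  ∀ a b c : ℤ_[p], N.eval (a • B 0 + b • B 1 + c • B 2) = a * b + δ * (p : ℤ_[p]) ^ j * c ^ 2

noncomputable def basisCoord (k : Fin 3) : (Fin 3 → ℤ) →+ ℤ_[p] :=
  (B.coord k).toAddMonoidHom.comp (TernaryForm.intCastVec ℤ_[p])

noncomputable def coordSubgroup (k : Fin 3) : AddSubgroup (Fin 3 → ℤ) :=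
  (Ideal.span {(p : ℤ_[p])}).toAddSubgroup.comap (basisCoord B k)

variable {B} {N : TernaryForm} {δ : ℤ_[p]} {j : ℕ}

theorem mem_coordSubgroup {k : Fin 3} {x : Fin 3 → ℤ} :
    x ∈ coordSubgroup B k ↔ (p : ℤ_[p]) ∣ basisCoord B k x :=
  Ideal.mem_span_singleton

theorem coordSubgroup_ne_top (k : Fin 3) : coordSubgroup B k ≠ ⊤ := by
  intro htop
  have hstd : ∀ i, (p : ℤ_[p]) ∣ B.coord k (fun j => if i = j then 1 else 0) := fun i => by
    have hx := htop ▸ AddSubgroup.mem_top (fun j => if i = j then (1 : ℤ) else 0)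
    simpa [mem_coordSubgroup, basisCoord, apply_ite (Int.cast : ℤ → ℤ_[p])] using hx
  have hone : (p : ℤ_[p]) ∣ 1 := by
    rw [← show B.coord k (B k) = 1 by simp, LinearMap.pi_apply_eq_sum_univ]
    exact Finset.dvd_sum fun i _ => by rw [smul_eq_mul]; exact (hstd i).mul_left _
  exact PadicInt.prime_p.not_isUnit (isUnit_of_dvd_one hone)

namespace IsHyperbolicBasis

theorem eval_eq (hB : IsHyperbolicBasis B N δ j) (w : Fin 3 → ℤ_[p]) :
    N.eval w = B.repr w 0 * B.repr w 1 + δ * (p : ℤ_[p]) ^ j * B.repr w 2 ^ 2 := by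
  conv_lhs => rw [← B.sum_repr w, Fin.sum_univ_three]
  exact hB _ _ _

theorem intCast_eval_eq (hB : IsHyperbolicBasis B N δ j) (x : Fin 3 → ℤ) :
    ((N.eval x : ℤ) : ℤ_[p]) =
      basisCoord B 0 x * basisCoord B 1 x + δ * (p : ℤ_[p]) ^ j * basisCoord B 2 x ^ 2 := by
  rw [N.intCast_eval, hB.eval_eq]
  rfl

theorem polar_basis_one (hB : IsHyperbolicBasis B N δ j) (w : Fin 3 → ℤ_[p]) :
    N.polar w (B 1) = B.repr w 0 := by
  simp only [TernaryForm.polar, hB.eval_eq, map_add, B.repr_self, Finsupp.add_apply,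
    Finsupp.single_apply, Fin.reduceEq, if_true, if_false]
  ring

theorem polar_basis_zero (hB : IsHyperbolicBasis B N δ j) (w : Fin 3 → ℤ_[p]) :
    N.polar w (B 0) = B.repr w 1 := by
  simp only [TernaryForm.polar, hB.eval_eq, map_add, B.repr_self, Finsupp.add_apply,
    Finsupp.single_apply, Fin.reduceEq, if_true, if_false]
  ring

theorem lambdaSet_eq (hj : 1 ≤ j) (hB : IsHyperbolicBasis B N δ j) :
    LambdaSet p N = ↑(coordSubgroup B 0 ⊓ coordSubgroup B 1) := by
  ext x
  simp only [SetLike.mem_coe, AddSubgroup.mem_inf, mem_coordSubgroup]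
  constructor
  · intro hx
    have h0 := dvd_polar_of_mem_lambdaSet hx (B 1)
    have h1 := dvd_polar_of_mem_lambdaSet hx (B 0)
    rw [hB.polar_basis_one] at h0
    rw [hB.polar_basis_zero] at h1
    exact ⟨h0, h1⟩
  · rintro ⟨h0, h1⟩ z
    rw [← PadicInt.p_dvd_intCast_iff, Int.cast_sub, hB.intCast_eval_eq, hB.intCast_eval_eq]
    obtain ⟨k, rfl⟩ := Nat.exists_eq_add_of_le' hj
    have hdiff : ∀ a₀ a₁ a₂ b₀ b₁ b₂ : ℤ_[p],
        (a₀ + b₀) * (a₁ + b₁) + δ * (p : ℤ_[p]) ^ (k + 1) * (a₂ + b₂) ^ 2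
          - (b₀ * b₁ + δ * (p : ℤ_[p]) ^ (k + 1) * b₂ ^ 2)
          = a₀ * (a₁ + b₁) + a₁ * b₀ + p * (δ * p ^ k * (a₂ ^ 2 + 2 * a₂ * b₂)) := by
      intros
      ring
    simp only [map_add, hdiff]
    exact ((h0.mul_right _).add (h1.mul_right _)).add (dvd_mul_right _ _)

theorem mem_coordSubgroup_or_of_dvd_eval (hj : 1 ≤ j) (hB : IsHyperbolicBasis B N δ j)
    {x : Fin 3 → ℤ} (hx : (p : ℤ) ∣ N.eval x) :
    x ∈ coordSubgroup B 0 ∨ x ∈ coordSubgroup B 1 := by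
  rw [← PadicInt.p_dvd_intCast_iff, hB.intCast_eval_eq] at hx
  have hpj : (p : ℤ_[p]) ∣ δ * (p : ℤ_[p]) ^ j * basisCoord B 2 x ^ 2 :=
    ((dvd_pow_self _ (by omega)).mul_left _).mul_right _
  simpa only [mem_coordSubgroup] using PadicInt.prime_p.dvd_mul.mp ((dvd_add_left hpj).mp hx)

theorem eq_coordSubgroup_of_normIdeal_eq (hj : 1 ≤ j) (hB : IsHyperbolicBasis B N δ j)
    {K : AddSubgroup (Fin 3 → ℤ)} (hK : K.index = p)
    (hKn : N.normIdeal K = Ideal.span {(p : ℤ)}) :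
    K = coordSubgroup B 0 ∨ K = coordSubgroup B 1 := by
  have hunion : (K : Set (Fin 3 → ℤ)) ⊆ coordSubgroup B 0 ∪ coordSubgroup B 1 := fun x hx =>
    hB.mem_coordSubgroup_or_of_dvd_eval hj <| (N.normIdeal_le_span_singleton_iff.mp hKn.le) x hx
  have hprime : K.index.Prime := hK ▸ Fact.out
  exact (AddSubgroupClass.subset_union.mp hunion).imp
    (AddSubgroup.eq_of_le_of_index_prime · hprime (coordSubgroup_ne_top 0))
    (AddSubgroup.eq_of_le_of_index_prime · hprime (coordSubgroup_ne_top 1))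

theorem sq_dvd_eval_of_mem_inf (hj : 2 ≤ j) (hB : IsHyperbolicBasis B N δ j) {x : Fin 3 → ℤ}
    (hx : x ∈ coordSubgroup B 0 ⊓ coordSubgroup B 1) : (p : ℤ) ^ 2 ∣ N.eval x := by
  rw [AddSubgroup.mem_inf, mem_coordSubgroup, mem_coordSubgroup] at hx
  rw [← PadicInt.pow_p_dvd_int_iff, hB.intCast_eval_eq, sq]
  exact (mul_dvd_mul hx.1 hx.2).add
    (((sq (p : ℤ_[p])) ▸ pow_dvd_pow _ hj).mul_left _ |>.mul_right _)

end IsHyperbolicBasis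

end Hyperbolic

theorem stmt_11_general (p : ℕ) [Fact p.Prime] (N : TernaryForm)
    (hNprim : N.Primitive) (j : ℕ) (hj : 1 ≤ j) (hhyp : IsHyperbolic p j N)
    (K₁ K₂ : AddSubgroup (Fin 3 → ℤ)) (hne : K₁ ≠ K₂)
    (h₁ : K₁.index = p) (h₂ : K₂.index = p)
    (hn₁ : N.normIdeal (K₁ : Set (Fin 3 → ℤ)) = Ideal.span {(p : ℤ)})
    (hn₂ : N.normIdeal (K₂ : Set (Fin 3 → ℤ)) = Ideal.span {(p : ℤ)}) :
    LambdaSet p N = (K₁ : Set (Fin 3 → ℤ)) ∩ (K₂ : Set (Fin 3 → ℤ)) ∧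
      (K₁ ⊓ K₂).relIndex K₁ = p ∧ (K₁ ⊓ K₂).relIndex K₂ = p ∧
      (2 ≤ j → N.normIdeal (LambdaSet p N) = Ideal.span {(p : ℤ) ^ 2}) := by
  obtain ⟨δ, -, B, hB⟩ := hhyp
  replace hB : IsHyperbolicBasis B N δ j := hB
  have hp : p.Prime := Fact.out
  have hK : K₁ ⊓ K₂ = coordSubgroup B 0 ⊓ coordSubgroup B 1 := by
    rcases hB.eq_coordSubgroup_of_normIdeal_eq hj h₁ hn₁ with rfl | rfl <;>
      rcases hB.eq_coordSubgroup_of_normIdeal_eq hj h₂ hn₂ with rfl | rfl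
    exacts [absurd rfl hne, rfl, inf_comm _ _, absurd rfl hne]
  refine ⟨by rw [hB.lambdaSet_eq hj, ← hK, AddSubgroup.coe_inf],
    AddSubgroup.relIndex_inf_left_of_index_eq_prime hp h₁ h₂ hne,
    inf_comm K₁ K₂ ▸ AddSubgroup.relIndex_inf_left_of_index_eq_prime hp h₂ h₁ hne.symm,
    fun hj₂ => le_antisymm ?_ (hNprim.span_sq_le_normIdeal (smul_mem_lambdaSet p N))⟩
  rw [N.normIdeal_le_span_singleton_iff, hB.lambdaSet_eq hj]
  exact fun x hx => hB.sq_dvd_eval_of_mem_inf hj₂ hx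

/-- For a primitive `p`-hyperbolic form of exponent `j ≥ 1` with two
distinct index-`p` subgroups `K₁, K₂` of norm `pℤ`: `Λ_p(N) = K₁ ∩ K₂`, `Λ_p(N)` has
index `p` in each `K_i`, and if `j ≥ 2` then `𝔫(Λ_p(N)) = p²ℤ`. -/
theorem stmt_11 (p : ℕ) [Fact p.Prime] (N : TernaryForm) (hN : N.PosDef)
    (hNprim : N.Primitive) (j : ℕ) (hj : 1 ≤ j) (hhyp : IsHyperbolic p j N)
    (K₁ K₂ : AddSubgroup (Fin 3 → ℤ)) (hne : K₁ ≠ K₂)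
    (h₁ : K₁.index = p) (h₂ : K₂.index = p)
    (hn₁ : N.normIdeal (K₁ : Set (Fin 3 → ℤ)) = Ideal.span {(p : ℤ)})
    (hn₂ : N.normIdeal (K₂ : Set (Fin 3 → ℤ)) = Ideal.span {(p : ℤ)}) :
    LambdaSet p N = (K₁ : Set (Fin 3 → ℤ)) ∩ (K₂ : Set (Fin 3 → ℤ)) ∧
      (K₁ ⊓ K₂).relIndex K₁ = p ∧ (K₁ ⊓ K₂).relIndex K₂ = p ∧
      (2 ≤ j → N.normIdeal (LambdaSet p N) = Ideal.span {(p : ℤ) ^ 2}) :=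
  stmt_11_general p N hNprim j hj hhyp K₁ K₂ hne h₁ h₂ hn₁ hn₂
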